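/- arXiv:2009.14023 — 4 statements merged into one kernel-verified Lean document; each statement's English description precedes it below -/
import Mathlib

section
/- Let C be a small category. Then the category of points of the presheaf topos C ⥤ Type is equivalent to Ind(C): the assignment sending a small-colimit-preserving, finite-limit-preserving functor p : (C ⥤ Type) ⥤ Type to the presheaf coyoneda ⋙ p : Cᵒᵖ ⥤ Type lands in the full subcategory of ind-objects and defines an equivalence of categories pt(C ⥤ Type) ≌ Ind(C). -/
/-!
The corepresentables `coyoneda.obj c` are dense in `C ⥤ Type u`. Hence a colimit-preserving
`p : (C ⥤ Type u) ⥤ Type u` is the left Kan extension of its restriction `coyoneda ⋙ p`, so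
restriction is fully faithful on points; and every element of `p` comes from an element of some
`p (coyoneda.obj c)`, so the category of elements of `coyoneda ⋙ p` is cofiltered as soon as that
of `p` is, which holds when `p` preserves finite limits. Conversely an ind-object
`A = colim_i yoneda (F i)` is the restriction of the point `X ↦ colim_i X (F i)`, which preserves
colimits and, the colimit being filtered, finite limits.
-/

open CategoryTheory Limits Opposite

universe u v

/-- The category of points `pt(E)` of a category `E`: the full subcategory of `E ⥤ Type u`
spanned by the functors preserving small colimits and finite limits. -/
abbrev PtCat (E : Type v) [Category.{u} E] :=
  ObjectProperty.FullSubcategory (fun p : E ⥤ Type u =>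
    PreservesColimitsOfSize.{u, u} p ∧ PreservesFiniteLimits p)

universe w v₁ v₂ v₃ u₁ u₂ u₃

noncomputable section

namespace CategoryTheory.Functor

section

variable {A : Type u₁} {D : Type u₂} [Category.{v₁} A] [Category.{v₂} D]

instance Elements.faithful_precomp (F : A ⥤ D) [F.Faithful] (G : D ⥤ Type w) :
    (Elements.precomp F G).Faithful where
  map_injective h := Subtype.ext (F.map_injective (congrArg Subtype.val h))

instance Elements.full_precomp (F : A ⥤ D) [F.Full] (G : D ⥤ Type w) :
    (Elements.precomp F G).Full where
  map_surjective f :=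
    ⟨⟨F.preimage f.1, (congrArg (fun g => G.map g _) (F.map_preimage f.1)).trans f.2⟩,
      Subtype.ext (F.map_preimage f.1)⟩

variable {E : Type u₃} [Category.{v₃} E]

lemma isLeftKanExtension_of_isDense (F : A ⥤ D) [F.IsDense] (L : D ⥤ E)
    [PreservesColimitsOfSize.{v₁, max u₁ v₂} L] : L.IsLeftKanExtension (𝟙 (F ⋙ L)) :=
  LeftExtension.IsPointwiseLeftKanExtension.isLeftKanExtension (E := LeftExtension.mk L (𝟙 _))
    fun Y => IsColimit.ofIsoColimit (isColimitOfPreserves L (F.denseAt Y))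
      (Cocone.ext (Iso.refl _) fun j =>
        (Category.comp_id _).trans ((congrArg L.map (Category.id_comp j.hom)).trans
          (Category.id_comp _).symm))

lemma whiskerLeft_bijective_of_isDense (F : A ⥤ D) [F.IsDense] {L L' : D ⥤ E}
    [PreservesColimitsOfSize.{v₁, max u₁ v₂} L] :
    Function.Bijective (whiskerLeft F : (L ⟶ L') → (F ⋙ L ⟶ F ⋙ L')) := by
  have := isLeftKanExtension_of_isDense F L
  convert (homEquivOfIsLeftKanExtension L (𝟙 (F ⋙ L)) L').bijective using 1
  ext
  simp

end

section

variable {A : Type w} [SmallCategory A] {D : Type u₂} [Category.{w} D]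

lemma exists_elements_hom_of_isDense (F : A ⥤ D) [F.IsDense] (p : D ⥤ Type w)
    [PreservesColimitsOfSize.{w, w} p] (e : p.Elements) :
    ∃ x : (F ⋙ p).Elements, Nonempty ((Elements.precomp F p).obj x ⟶ e) := by
  obtain ⟨j, z, hz⟩ := Types.jointly_surjective _ (isColimitOfPreserves p (F.denseAt e.1)) e.2
  exact ⟨⟨j.left, z⟩,
    ⟨⟨j.hom, (congrArg (fun g => p.map g z) (Category.id_comp j.hom)).symm.trans hz⟩⟩⟩

lemma isCofiltered_elements_comp_of_isDense (F : A ⥤ D) [F.IsDense] [F.Full] [F.Faithful]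
    [HasFiniteLimits D] (p : D ⥤ Type w) [PreservesColimitsOfSize.{w, w} p]
    [PreservesFiniteLimits p] : IsCofiltered (F ⋙ p).Elements := by
  have : HasFiniteLimits p.Elements := ⟨fun _ _ _ => inferInstance⟩
  have : IsCofiltered p.Elements := IsCofiltered.of_hasFiniteLimits _
  exact IsCofiltered.of_exists_of_isCofiltered_of_fullyFaithful (Elements.precomp F p)
    (exists_elements_hom_of_isDense F p)

end

end CategoryTheory.Functor

namespace CategoryTheory

section

variable {C : Type u₁} [Category.{v₁} C]

def yonedaCompCongrLeftOpOpIso :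
    yoneda ⋙ (opOpEquivalence C).congrLeft.functor ≅ (coyoneda : Cᵒᵖ ⥤ C ⥤ Type v₁) :=
  NatIso.ofComponents fun _ => NatIso.ofComponents fun _ =>
    Equiv.toIso ⟨Quiver.Hom.unop, Quiver.Hom.op, fun _ => rfl, fun _ => rfl⟩

instance isDense_coyoneda : (coyoneda : Cᵒᵖ ⥤ C ⥤ Type v₁).IsDense :=
  .of_iso yonedaCompCongrLeftOpOpIso

end

lemma isIndObject_of_isCofiltered_elements {C : Type u} [SmallCategory C] (A : Cᵒᵖ ⥤ Type u)
    [IsCofiltered A.Elements] : IsIndObject A :=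
  have : IsFiltered (CostructuredArrow yoneda A) :=
    .of_equivalence (CategoryOfElements.costructuredArrowYonedaEquivalence A)
  have := essentiallySmallSelf (CostructuredArrow yoneda A)
  have := finallySmall_of_essentiallySmall (CostructuredArrow yoneda A)
  isIndObject_of_isFiltered_of_finallySmall A

namespace Limits.IndObjectPresentation

variable {C : Type u} [SmallCategory C] {A : Cᵒᵖ ⥤ Type u} (P : IndObjectPresentation A)

def point : (C ⥤ Type u) ⥤ Type u :=
  (Functor.whiskeringLeft P.I C (Type u)).obj P.F ⋙ colim

instance : PreservesColimitsOfSize.{u, u} P.point :=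
  inferInstanceAs (PreservesColimitsOfSize (_ ⋙ colim))

instance : PreservesFiniteLimits P.point :=
  inferInstanceAs (PreservesFiniteLimits (_ ⋙ colim))

def coyonedaCompPointIso : coyoneda ⋙ P.point ≅ A :=
  (colimitIsoFlipCompColim (P.F ⋙ CategoryTheory.yoneda)).symm ≪≫
    (colimit.isColimit _).coconePointUniqueUpToIso P.coconeIsColimit

end Limits.IndObjectPresentation

end CategoryTheory

namespace PtCat

section

variable {E : Type v} [Category.{u} E] (p : PtCat E)

instance : PreservesColimitsOfSize.{u, u} p.obj := p.property.1

instance : PreservesFiniteLimits p.obj := p.property.2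

end

variable (C : Type u) [SmallCategory C]

lemma isIndObject_coyoneda_comp (p : PtCat (C ⥤ Type u)) : IsIndObject (coyoneda ⋙ p.obj) :=
  have := Functor.isCofiltered_elements_comp_of_isDense coyoneda p.obj
  isIndObject_of_isCofiltered_elements _

def toIndObject : PtCat (C ⥤ Type u) ⥤ ObjectProperty.FullSubcategory (IsIndObject (C := C)) :=
  ObjectProperty.lift _
    (ObjectProperty.ι _ ⋙ (Functor.whiskeringLeft Cᵒᵖ (C ⥤ Type u) (Type u)).obj coyoneda)
    (isIndObject_coyoneda_comp C)

instance : (toIndObject C).Faithful where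
  map_injective {p _} _ _ h := ObjectProperty.hom_ext _
    ((Functor.whiskerLeft_bijective_of_isDense coyoneda (L := p.obj)).1 (congrArg (·.hom) h))

instance : (toIndObject C).Full where
  map_surjective {p _} φ :=
    have ⟨η, hη⟩ := (Functor.whiskerLeft_bijective_of_isDense coyoneda (L := p.obj)).2 φ.hom
    ⟨ObjectProperty.homMk η, ObjectProperty.hom_ext _ hη⟩

instance : (toIndObject C).EssSurj where
  mem_essImage A :=
    let P := A.property.presentation
    ⟨⟨P.point, inferInstance, inferInstance⟩,
      ⟨ObjectProperty.isoMk _ P.coyonedaCompPointIso⟩⟩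

instance : (toIndObject C).IsEquivalence where

def equivInd : PtCat (C ⥤ Type u) ≌ Ind C :=
  (toIndObject C).asEquivalence.trans (Ind.equivalence C).symm

end PtCat

end

/-- The category of points of the presheaf topos `C ⥤ Type u` is equivalent to `Ind C`: every
point `p : (C ⥤ Type u) ⥤ Type u` yields an ind-object `coyoneda ⋙ p : Cᵒᵖ ⥤ Type u`, and this
assignment defines an equivalence `pt(C ⥤ Type u) ≌ Ind C`. -/
theorem pt_presheaf_equiv_ind (C : Type u) [SmallCategory C] :
    (∀ p : PtCat (C ⥤ Type u), IsIndObject (coyoneda ⋙ p.obj)) ∧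
    ∃ e : PtCat (C ⥤ Type u) ≌ Ind C,
      ∀ p : PtCat (C ⥤ Type u),
        Nonempty ((Ind.inclusion C).obj (e.functor.obj p) ≅ coyoneda ⋙ p.obj) :=
  ⟨PtCat.isIndObject_coyoneda_comp C, PtCat.equivInd C, fun p =>
    ⟨(ObjectProperty.ι _).mapIso
      ((Ind.equivalence C).counitIso.app ((PtCat.toIndObject C).obj p))⟩⟩
end

section
/- Let E be a category and let F be a category with small colimits and finite limits in which filtered colimits commute with finite limits (for instance a Grothendieck topos). Then the full subcategory of the functor category E ⥤ F spanned by the functors preserving small colimits and finite limits is closed under filtered colimits in E ⥤ F; in particular this subcategory has filtered colimits, computed pointwise. -/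
/-!
A colimit `c` of a diagram `D : I ⥤ E ⥤ F` is computed pointwise, `c.pt ≅ D.flip ⋙ colim`.
Since limits and colimits in `I ⥤ F` are pointwise, `D.flip` preserves every limit and colimit
that all the `D.obj i` preserve; `colim` preserves colimits as a left adjoint, and finite limits
when `I` is filtered by the commutation hypothesis. Closure under colimits of shape `I` then gives
the colimits of shape `I` in the full subcategory.
-/

open CategoryTheory Limits Opposite

universe u v

/-- The category `Cocontlex(E, F)` of functors `E ⥤ F` preserving small colimits and finite
limits (the hom-category `Topoi(F, E)` of geometric morphisms when `E` and `F` are topoi). -/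
abbrev CocontLex (E : Type (u + 1)) [Category.{u} E] (F : Type (u + 1)) [Category.{u} F] :=
  ObjectProperty.FullSubcategory (fun p : E ⥤ F =>
    PreservesColimitsOfSize.{u, u} p ∧ PreservesFiniteLimits p)

universe w w'

namespace CategoryTheory.ObjectProperty

variable {J C : Type*} [Category* J] [Category* C] (K K' : Type*) [Category* K] [Category* K']

instance isClosedUnderColimitsOfShape_preservesColimitsOfShape [HasColimitsOfShape K' C] :
    (preservesColimitsOfShape K : ObjectProperty (J ⥤ C)).IsClosedUnderColimitsOfShape K' where
  colimitsOfShape_le := by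
    rintro G ⟨h⟩
    have := h.prop_diag_obj
    have : PreservesColimitsOfShape K h.diag.flip := ⟨fun {F} ↦ ⟨fun {c} hc ↦
      ⟨evaluationJointlyReflectsColimits _
        (fun k' ↦ isColimitOfPreserves (h.diag.obj k') hc)⟩⟩⟩
    let e : h.diag.flip ⋙ colim ≅ G :=
      NatIso.ofComponents
        (fun j ↦ (colimit.isColimit (h.diag.flip.obj j)).coconePointUniqueUpToIso
          (isColimitOfPreserves ((evaluation _ _).obj j) h.isColimit))
    exact preservesColimitsOfShape_of_natIso e

variable {K'} in
lemma preservesColimitsOfSize_of_isColimit [HasColimitsOfShape K' C] {D : K' ⥤ J ⥤ C}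
    (hD : ∀ k, PreservesColimitsOfSize.{w, w'} (D.obj k)) {c : Cocone D} (hc : IsColimit c) :
    PreservesColimitsOfSize.{w, w'} c.pt :=
  ⟨fun {K} _ ↦ (preservesColimitsOfShape K).prop_of_isColimit hc fun _ ↦ inferInstance⟩

end CategoryTheory.ObjectProperty

theorem cocontlex_closed_under_filtered_colimits_general
    (E : Type (u + 1)) [Category.{u} E]
    (F : Type (u + 1)) [Category.{u} F] [HasColimitsOfSize.{u, u} F]
    (hcomm : ∀ (I : Type u) [SmallCategory I], IsFiltered I →
      PreservesFiniteLimits (colim : (I ⥤ F) ⥤ F)) :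
    ∀ (I : Type u) [SmallCategory I], IsFiltered I →
      (∀ D : I ⥤ (E ⥤ F),
        (∀ i, PreservesColimitsOfSize.{u, u} (D.obj i) ∧ PreservesFiniteLimits (D.obj i)) →
        ∀ c : Cocone D, IsColimit c →
          PreservesColimitsOfSize.{u, u} c.pt ∧ PreservesFiniteLimits c.pt) ∧
      HasColimitsOfShape I (CocontLex E F) := by
  intro I _ hI
  -- makes `preservesFiniteLimits` closed under colimits of shape `I` (a Mathlib instance)
  have : HasExactColimitsOfShape I F := ⟨hcomm I hI⟩
  have closed (D : I ⥤ E ⥤ F)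
      (hD : ∀ i, PreservesColimitsOfSize.{u, u} (D.obj i) ∧ PreservesFiniteLimits (D.obj i))
      (c : Cocone D) (hc : IsColimit c) :
      PreservesColimitsOfSize.{u, u} c.pt ∧ PreservesFiniteLimits c.pt :=
    ⟨ObjectProperty.preservesColimitsOfSize_of_isColimit (fun i ↦ (hD i).1) hc,
      ObjectProperty.preservesFiniteLimits.prop_of_isColimit hc fun i ↦ (hD i).2⟩
  have : ObjectProperty.IsClosedUnderColimitsOfShape
      (fun p : E ⥤ F ↦ PreservesColimitsOfSize.{u, u} p ∧ PreservesFiniteLimits p) I :=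
    ⟨by rintro G ⟨h⟩; exact closed _ h.prop_diag_obj _ h.isColimit⟩
  exact ⟨closed, inferInstance⟩

/-- Let `E` be a category and `F` a category with small colimits and finite limits in which
filtered colimits commute with finite limits.  Then the full subcategory `Cocontlex(E, F)` of
`E ⥤ F` spanned by the functors preserving small colimits and finite limits is closed under
filtered colimits in `E ⥤ F`; in particular it has filtered colimits, computed pointwise. -/
theorem cocontlex_closed_under_filtered_colimits
    (E : Type (u + 1)) [Category.{u} E]
    (F : Type (u + 1)) [Category.{u} F] [HasColimitsOfSize.{u, u} F] [HasFiniteLimits F]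
    (hcomm : ∀ (I : Type u) [SmallCategory I], IsFiltered I →
      PreservesFiniteLimits (colim : (I ⥤ F) ⥤ F)) :
    ∀ (I : Type u) [SmallCategory I], IsFiltered I →
      (∀ D : I ⥤ (E ⥤ F),
        (∀ i, PreservesColimitsOfSize.{u, u} (D.obj i) ∧ PreservesFiniteLimits (D.obj i)) →
        ∀ c : Cocone D, IsColimit c →
          PreservesColimitsOfSize.{u, u} c.pt ∧ PreservesFiniteLimits c.pt) ∧
      HasColimitsOfShape I (CocontLex E F) :=
  cocontlex_closed_under_filtered_colimits_general E F hcomm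
end

section
/- Let E and G be categories with small colimits and finite limits, and let i^* : E ⥤ G be a functor admitting a fully faithful right adjoint i_* : G ⥤ E, with i^* preserving finite limits (so that the adjunction i^* ⊣ i_* is a geometric embedding when E and G are topoi). Then the induced functor pt(G) ⥤ pt(E), sending a point p : G ⥤ Type to i^* ⋙ p and a natural transformation μ to its whiskering with i^*, is fully faithful. -/
open CategoryTheory Limits Opposite

universe u v

variable {E G : Type (u + 1)} [Category.{u} E] [Category.{u} G]

/-- The functor `pt(G) ⥤ pt(E)` induced by the inverse image `i^* : E ⥤ G` of a geometric
morphism: it sends a point `p : G ⥤ Type u` to `i^* ⋙ p`, and a natural transformation to its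
whiskering with `i^*`. -/
def ptMap (i : E ⥤ G) (i' : G ⥤ E) (adj : i ⊣ i') [PreservesFiniteLimits i] :
    PtCat G ⥤ PtCat E :=
  ObjectProperty.lift _
    (ObjectProperty.ι _ ⋙ (Functor.whiskeringLeft E G (Type u)).obj i)
    (fun p => by
      haveI := p.property.1; haveI := p.property.2
      haveI : PreservesColimitsOfSize.{u, u} i := adj.leftAdjoint_preservesColimits
      exact ⟨inferInstanceAs (PreservesColimitsOfSize.{u, u} (i ⋙ p.obj)),
        comp_preservesFiniteLimits i p.obj⟩)

/- A left adjoint with fully faithful right adjoint is a localization (at the morphisms it inverts),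
and precomposition with a localization functor is fully faithful on functor categories; points
form a full subcategory on both sides. -/
theorem ptMap_full_and_faithful_general
    (i : E ⥤ G) (i' : G ⥤ E) (adj : i ⊣ i') [i'.Full] [i'.Faithful]
    [PreservesFiniteLimits i] :
    (ptMap i i' adj).Full ∧ (ptMap i i' adj).Faithful := by
  have := adj.isLocalization
  let W := (MorphismProperty.isomorphisms G).inverseImage i
  have := Localization.full_whiskeringLeft i W (Type u)
  have := Localization.faithful_whiskeringLeft i W (Type u)
  exact ⟨inferInstanceAs (ObjectProperty.lift _ _ _).Full,
    inferInstanceAs (ObjectProperty.lift _ _ _).Faithful⟩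

/-- `pt` sends geometric embeddings to fully faithful functors: if `i^* : E ⥤ G` preserves
finite limits and admits a fully faithful right adjoint `i_* : G ⥤ E` (a geometric embedding
when `E` and `G` are topoi), then the induced functor `pt(G) ⥤ pt(E)`, `p ↦ i^* ⋙ p`, is fully
faithful. -/
theorem ptMap_full_and_faithful
    [HasColimitsOfSize.{u, u} E] [HasFiniteLimits E]
    [HasColimitsOfSize.{u, u} G] [HasFiniteLimits G]
    (i : E ⥤ G) (i' : G ⥤ E) (adj : i ⊣ i') [i'.Full] [i'.Faithful]
    [PreservesFiniteLimits i] :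
    (ptMap i i' adj).Full ∧ (ptMap i i' adj).Faithful :=
  ptMap_full_and_faithful_general i i' adj
end

section
/- Let f : E ⥤ G be a functor such that every object of G is a subquotient of an object in the image of f, i.e. for every object g of G there exist an object e of E, an object g' of G, a monomorphism m : g ⟶ g' and an epimorphism l : f(e) ⟶ g'. Let p, q : G ⥤ Type be functors such that p preserves epimorphisms and q preserves monomorphisms, and let μ, ν : p ⟶ q be natural transformations. If the whiskered transformations whiskerLeft f μ and whiskerLeft f ν (with components μ_{f(e)} and ν_{f(e)}) are equal, then μ = ν. (This is the key step showing that pt sends localic geometric morphisms to faithful functors, since the inverse image of a point of a topos preserves epimorphisms and monomorphisms.) -/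
open CategoryTheory Limits Opposite

universe u v

universe w v₁ v₂ u₁ u₂

namespace CategoryTheory.NatTrans

variable {C : Type u₁} [Category.{v₁} C] {D : Type u₂} [Category.{v₂} D] {p q : C ⥤ D}

theorem app_eq_of_epi_map (μ ν : p ⟶ q) {X Y : C} (l : X ⟶ Y) [Epi (p.map l)]
    (h : μ.app X = ν.app X) : μ.app Y = ν.app Y := by
  rw [← cancel_epi (p.map l), μ.naturality, ν.naturality, h]

theorem app_eq_of_mono_map (μ ν : p ⟶ q) {X Y : C} (m : X ⟶ Y) [Mono (q.map m)]
    (h : μ.app Y = ν.app Y) : μ.app X = ν.app X := by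
  rw [← cancel_mono (q.map m), ← μ.naturality, ← ν.naturality, h]

end CategoryTheory.NatTrans

/-- If every object of `G` is a subquotient of an object in the image of `f : E ⥤ G`, then two
natural transformations `μ ν : p ⟶ q` between functors `p q : G ⥤ Type w`, where `p` preserves
epimorphisms and `q` preserves monomorphisms, agree as soon as their whiskerings with `f`
agree.  (This is the key step showing that `pt` sends localic geometric morphisms to faithful
functors.) -/
theorem natTrans_ext_of_subquotients
    {E : Type u₁} [Category.{v₁} E] {G : Type u₂} [Category.{v₂} G] (f : E ⥤ G)
    (hsub : ∀ g : G, ∃ (e : E) (g' : G) (m : g ⟶ g') (l : f.obj e ⟶ g'), Mono m ∧ Epi l)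
    (p q : G ⥤ Type w) [p.PreservesEpimorphisms] [q.PreservesMonomorphisms]
    (μ ν : p ⟶ q) (h : Functor.whiskerLeft f μ = Functor.whiskerLeft f ν) : μ = ν := by
  refine NatTrans.ext (funext fun g => ?_)
  obtain ⟨e, g', m, l, _, _⟩ := hsub g
  refine NatTrans.app_eq_of_mono_map μ ν m (NatTrans.app_eq_of_epi_map μ ν l ?_)
  exact congrArg (fun τ => τ.app e) h
end
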